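/- Let G = ⟨V, E, w⟩ be a bipartite mean-payoff game, i.e., E ⊆ V_Max × V_Min ∪ V_Min × V_Max. Let G' be the MCR game obtained from G by adding a fresh target vertex t, edges (v, t) of weight 0 for every v ∈ V_Min, and the self-loop (t, t) of weight 0. Then for every vertex v ∈ V: Val_G(v) < 0 if and only if Val_{G'}(v) = −∞. -/

import Mathlib

open Filter

/-- A two-player turn-based weighted game graph. `owner v = true` means that
vertex `v` belongs to player Max, `owner v = false` that it belongs to player Min.
Every vertex has at least one successor. -/
structure Game (V : Type) where
  owner : V → Bool
  E : V → V → Prop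
  nonempty : ∀ v, ∃ v', E v v'
  w : V → V → ℤ

namespace Game

variable {V : Type}

/-- The (reversed) history of the first `k` vertices of `π` (most recent first). -/
def hist (π : ℕ → V) (k : ℕ) : List V := (List.ofFn fun i : Fin k => π i).reverse

/-- A strategy: given the (reversed) list of previously visited vertices and the current
vertex, it picks a successor of the current vertex. -/
structure Strategy (g : Game V) where
  next : List V → V → V
  valid : ∀ h v, g.E v (next h v)

/-- A memoryless strategy only depends on the current vertex. -/
def Strategy.Memoryless {g : Game V} (s : g.Strategy) : Prop :=
  ∀ h h' v, s.next h v = s.next h' v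

/-- A finite-memory strategy is one encoded by a deterministic Moore machine
`⟨M, m0, up, dec⟩`: the choice after a finite play is `dec` applied to the memory state
reached by reading the play (the initial vertex is not read) and to the last vertex. -/
def Strategy.FiniteMemory {g : Game V} (s : g.Strategy) : Prop :=
  ∃ (M : Type) (_ : Fintype M) (m0 : M) (up : M → V → M) (dec : M → V → V),
    ∀ h v, s.next h v = dec (List.foldl up m0 (((h.reverse ++ [v]).drop 1))) v

variable (g : Game V)

/-- Next vertex chosen by the owner of the current vertex. -/
def step (σ τ : g.Strategy) (h : List V) (v : V) : V :=
  if g.owner v then σ.next h v else τ.next h v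

/-- Current vertex and reversed history after `k` steps of the play `Play(v, σ, τ)`. -/
def playAux (σ τ : g.Strategy) (v : V) : ℕ → V × List V
  | 0 => (v, [])
  | k+1 =>
      let p := playAux σ τ v k
      (g.step σ τ p.2 p.1, p.1 :: p.2)

/-- `Play(v, σ, τ)`: the unique play starting in `v` and conforming to the
strategy `σ` of Max and the strategy `τ` of Min. -/
def play (σ τ : g.Strategy) (v : V) (k : ℕ) : V := (g.playAux σ τ v k).1

/-- An infinite sequence of vertices is a play when consecutive vertices are linked
by edges. -/
def IsPlay (π : ℕ → V) : Prop := ∀ k, g.E (π k) (π (k+1))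

/-- A play conforms to a strategy `s` of the player `p` if, whenever the current vertex
belongs to `p`, the next vertex is the one prescribed by `s`. -/
def Conforms (p : Bool) (s : g.Strategy) (π : ℕ → V) : Prop :=
  ∀ k, g.owner (π k) = p → π (k+1) = s.next (hist π k) (π k)

/-- Total-payoff of the prefix of length `k`: the sum of the first `k` edge weights. -/
def TPfin (π : ℕ → V) (k : ℕ) : ℤ := ∑ i ∈ Finset.range k, g.w (π i) (π (i+1))

/-- Total payoff of an infinite play: `liminf` of the payoffs of its prefixes. -/
noncomputable def TP (π : ℕ → V) : EReal :=
  liminf (fun k => (((g.TPfin π k : ℤ) : ℝ) : EReal)) atTop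

/-- Mean payoff of an infinite play. -/
noncomputable def MP (π : ℕ → V) : EReal :=
  liminf (fun k => ((((g.TPfin π k : ℤ) : ℝ) / (k : ℝ)) : EReal)) atTop

open Classical in
/-- Min-cost reachability payoff with target `t`: total payoff up to the first visit
of `t`, and `+∞` if `t` is never visited. -/
noncomputable def MCR (t : V) (π : ℕ → V) : EReal :=
  if h : ∃ k, π k = t then (((g.TPfin π (Nat.find h) : ℤ) : ℝ) : EReal) else ⊤

open Classical in
/-- `MCR` payoff restricted to reaching the target among the first `i+1` vertices. -/
noncomputable def MCRbd (t : V) (i : ℕ) (π : ℕ → V) : EReal :=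
  if ∃ k ≤ i, π k = t then g.MCR t π else ⊤

/-- Value of a strategy `σ` of Max from `v` : `inf_τ P(Play(v, σ, τ))`. -/
noncomputable def valMax (P : (ℕ → V) → EReal) (v : V) (σ : g.Strategy) : EReal :=
  ⨅ τ : g.Strategy, P (g.play σ τ v)

/-- Value of a strategy `τ` of Min from `v` : `sup_σ P(Play(v, σ, τ))`. -/
noncomputable def valMin (P : (ℕ → V) → EReal) (v : V) (τ : g.Strategy) : EReal :=
  ⨆ σ : g.Strategy, P (g.play σ τ v)

/-- Lower value `Val⁻(v) = sup_σ inf_τ P(Play(v, σ, τ))`. -/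
noncomputable def lowerVal (P : (ℕ → V) → EReal) (v : V) : EReal :=
  ⨆ σ : g.Strategy, g.valMax P v σ

/-- Upper value `Val⁺(v) = inf_τ sup_σ P(Play(v, σ, τ))`. -/
noncomputable def upperVal (P : (ℕ → V) → EReal) (v : V) : EReal :=
  ⨅ τ : g.Strategy, g.valMin P v τ

end Game

/-- A min-cost reachability game: a game together with a target vertex `t` whose only
outgoing edge is a self-loop of weight `0`. -/
structure MCRGame (V : Type) extends Game V where
  t : V
  loop : E t t
  loopOnly : ∀ v, E t v → v = t
  loopZero : w t t = 0

/-- The value of a (determined) MCR game. -/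
noncomputable def MCRGame.Val {V : Type} (G : MCRGame V) : V → EReal :=
  fun v => G.toGame.lowerVal (G.toGame.MCR G.t) v

/-- The `i`-step value `val_i(v) = inf_τ sup_σ MCR_i(Play(v, σ, τ))`. -/
noncomputable def MCRGame.ival {V : Type} (G : MCRGame V) (i : ℕ) : V → EReal :=
  fun v => G.toGame.upperVal (G.toGame.MCRbd G.t i) v

/-- The MCR game obtained from a mean-payoff game by adding a fresh target vertex
(`none`), edges of weight `0` from every Min vertex to the target, and a zero
self-loop on the target. -/
def mcrOf {V : Type} (g : Game V) : MCRGame (Option V) where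
  owner x := match x with
    | none => true
    | some v => g.owner v
  E x y := match x, y with
    | some v, some v' => g.E v v'
    | some v, none => g.owner v = false
    | none, y => y = none
  nonempty x := by
    match x with
    | none => exact ⟨none, rfl⟩
    | some v =>
        obtain ⟨v', h⟩ := g.nonempty v
        exact ⟨some v', h⟩
  w x y := match x, y with
    | some v, some v' => g.w v v'
    | _, _ => 0
  t := none
  loop := rfl
  loopOnly := fun _ h => h
  loopZero := rfl

/-!
If Min can answer every Max strategy with a play of negative mean payoff, the total payoff along
that play becomes arbitrarily negative, and by bipartiteness it does so at Min vertices, from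
which Min can leave for the target. So against every Max strategy of `mcrOf g`, Min pushes the
MCR payoff below any bound.

For the converse, track configurations (vertex, payoff relative to a reference point) and let
`canDrop Y` be the set of vertices from which Min can force reaching `Y` with a negative
relative payoff. The chain `Y₀ = V`, `Yᵢ₊₁ = Yᵢ ∩ canDrop Yᵢ` stabilises at a set
`Z = dropSet` with `Z ⊆ canDrop Z`. From `Z`, Min repeats the attractor strategy; its ranks are
bounded by some `R`, so the payoff drops by one at least every `R + 1` steps and the mean payoff
is at most `-1/(2(R+1))`. A vertex `v` outside `Z` has a level `ℓ` with
`v ∈ Yℓ \ canDrop Yℓ`; Max keeps out of Min's attractor for `Yℓ`, so the relative payoff stays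
nonnegative while the play stays in `Yℓ`, and leaving `Yℓ` strictly lowers the level at a cost
of at most one edge weight. So the MCR payoff is at least `-ℓ · W`, where `W` bounds the
absolute weights, and the MCR value is finite.
-/

namespace Game

variable {V : Type} (g : Game V)

noncomputable def someSucc (v : V) : V := (g.nonempty v).choose

lemma E_someSucc (v : V) : g.E v (g.someSucc v) := (g.nonempty v).choose_spec

section Plays

variable {g}

lemma hist_length (π : ℕ → V) (k : ℕ) : (hist π k).length = k := by
  simp [hist]

lemma hist_congr {π π' : ℕ → V} {k : ℕ} (h : ∀ i < k, π i = π' i) : hist π k = hist π' k := by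
  simp only [hist, List.reverse_inj, List.ofFn_inj]
  exact funext fun i => h i i.isLt

lemma hist_comp {α : Type} (f : V → α) (π : ℕ → V) (k : ℕ) :
    hist (f ∘ π) k = (hist π k).map f := by
  simp [hist, List.map_ofFn, Function.comp_def]

lemma hist_succ (π : ℕ → V) (k : ℕ) : hist π (k+1) = π k :: hist π k := by
  rw [hist, hist, List.ofFn_succ']
  simp [List.concat_eq_append]

lemma getD_reverse_hist (π : ℕ → V) {i k : ℕ} (hi : i ≤ k) :
    (hist π k).reverse.getD i (π k) = π i := by
  rcases hi.lt_or_eq with hi | rfl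
  · simp [hist, hi]
  · simp [hist]

lemma play_succ (σ τ : g.Strategy) (v : V) (k : ℕ) :
    g.play σ τ v (k+1) = g.step σ τ (hist (g.play σ τ v) k) (g.play σ τ v k) := by
  have hsnd : ∀ k, (g.playAux σ τ v k).2 = hist (g.play σ τ v) k := by
    intro k
    induction k with
    | zero => simp [playAux, hist]
    | succ k ih => rw [hist_succ, ← ih]; rfl
  rw [← hsnd]; rfl

lemma isPlay_play (σ τ : g.Strategy) (v : V) : g.IsPlay (g.play σ τ v) := by
  intro k
  rw [play_succ, step]
  split <;> apply Strategy.valid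

lemma conforms_play_max (σ τ : g.Strategy) (v : V) : g.Conforms true σ (g.play σ τ v) := by
  intro k hk
  simp [play_succ, step, hk]

lemma conforms_play_min (σ τ : g.Strategy) (v : V) : g.Conforms false τ (g.play σ τ v) := by
  intro k hk
  simp [play_succ, step, hk]

lemma play_congr {σ σ' τ τ' : g.Strategy} {K : ℕ}
    (hσ : ∀ h u, h.length < K → σ.next h u = σ'.next h u)
    (hτ : ∀ h u, h.length < K → τ.next h u = τ'.next h u) (v : V) :
    ∀ k ≤ K, g.play σ τ v k = g.play σ' τ' v k := by
  intro k hk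
  induction k using Nat.strong_induction_on with
  | _ k ih =>
    cases k with
    | zero => rfl
    | succ k =>
      have hist_eq : hist (g.play σ τ v) k = hist (g.play σ' τ' v) k :=
        hist_congr fun i hi => ih i (by omega) (by omega)
      have hlen : (hist (g.play σ' τ' v) k).length < K := by rw [hist_length]; omega
      rw [play_succ, play_succ, hist_eq, ih k (by omega) (by omega), step, step, hσ _ _ hlen,
        hτ _ _ hlen]

end Plays

section Memory

variable {M : Type} (init : V → M) (upd : M → V → V → M)

def memory (π : ℕ → V) : ℕ → M
  | 0 => init (π 0)
  | k+1 => upd (memory π k) (π k) (π (k+1))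

variable {init upd}

lemma memory_congr {π π' : ℕ → V} {k : ℕ} (h : ∀ i ≤ k, π i = π' i) :
    memory init upd π k = memory init upd π' k := by
  induction k with
  | zero => simp [memory, h 0 le_rfl]
  | succ k ih =>
    simp only [memory]
    rw [ih fun i hi => h i (by omega), h k (by omega), h (k+1) le_rfl]

def Strategy.ofMemory {g : Game V} (init : V → M) (upd : M → V → V → M) (move : M → V → V)
    (hmove : ∀ m u, g.E u (move m u)) : g.Strategy where
  next h u := move (memory init upd (fun i => h.reverse.getD i u) h.length) u
  valid _ _ := hmove _ _

lemma Strategy.ofMemory_next_hist {g : Game V} {move : M → V → V}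
    (hmove : ∀ m u, g.E u (move m u)) (π : ℕ → V) (k : ℕ) :
    (ofMemory init upd move hmove).next (hist π k) (π k) = move (memory init upd π k) (π k) := by
  simp only [ofMemory, hist_length]
  rw [memory_congr fun i hi => getD_reverse_hist π hi]

end Memory

section Reduction

variable {g}

@[simp] lemma owner_mcrOf_some (u : V) : (mcrOf g).owner (some u) = g.owner u := rfl

noncomputable def Strategy.restrict (σ : (mcrOf g).Strategy) : g.Strategy where
  next h u := (σ.next (h.map some) (some u)).getD (g.someSucc u)
  valid h u := by
    have hE := σ.valid (h.map some) (some u)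
    cases hσ : σ.next (h.map some) (some u) with
    | none => exact g.E_someSucc u
    | some u' => rw [hσ] at hE; exact hE

def Strategy.lift (σ : g.Strategy) : (mcrOf g).Strategy where
  next h x := x.map (σ.next (h.filterMap id))
  valid h x := by
    cases x with
    | none => rfl
    | some u => exact σ.valid _ u

lemma Strategy.restrict_lift (σ : g.Strategy) : σ.lift.restrict = σ := by
  cases σ
  simp [restrict, lift, List.filterMap_map]

lemma play_mcrOf_eq_some (σ τ : (mcrOf g).Strategy) (v : V) (k : ℕ)
    (h : ∀ i ≤ k, (mcrOf g).play σ τ (some v) i ≠ none) :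
    (mcrOf g).play σ τ (some v) k = some (g.play σ.restrict τ.restrict v k) := by
  induction k using Nat.strong_induction_on with
  | _ k ih =>
    cases k with
    | zero => rfl
    | succ k =>
      set π := (mcrOf g).play σ τ (some v)
      set ρ := g.play σ.restrict τ.restrict v
      have hρ : ∀ i ≤ k, π i = some (ρ i) := fun i hi =>
        ih i (by omega) fun j hj => h j (by omega)
      have hhist : hist π k = (hist ρ k).map some := by
        rw [← hist_comp]
        exact hist_congr fun i hi => hρ i (by omega)
      have hnext := h (k+1) le_rfl
      have hπ : π (k+1) = (mcrOf g).step σ τ (hist π k) (π k) := play_succ ..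
      have hρ' : ρ (k+1) = g.step σ.restrict τ.restrict (hist ρ k) (ρ k) := play_succ ..
      rw [hπ, hhist, hρ k le_rfl] at hnext ⊢
      rw [hρ']
      cases hown : g.owner (ρ k) <;>
        simp only [step, owner_mcrOf_some, hown, Strategy.restrict] at hnext ⊢ <;>
        exact (Option.getD_of_ne_none hnext _).symm

lemma TPfin_mcrOf {π : ℕ → Option V} {ρ : ℕ → V} {m : ℕ} (hρ : ∀ i ≤ m, π i = some (ρ i)) :
    (mcrOf g).TPfin π m = g.TPfin ρ m := by
  refine Finset.sum_congr rfl fun i hi => ?_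
  rw [Finset.mem_range] at hi
  rw [hρ i hi.le, hρ (i+1) hi]
  rfl

lemma MCR_mcrOf_of_hit {π : ℕ → Option V} {ρ : ℕ → V} {m : ℕ}
    (hρ : ∀ i ≤ m, π i = some (ρ i)) (hm : π (m+1) = none) :
    (mcrOf g).MCR (mcrOf g).t π = (((g.TPfin ρ m : ℤ) : ℝ) : EReal) := by
  -- `MCR` uses the classical decidability instance
  have hfirst : ∀ (_ : DecidablePred fun n => π n = (mcrOf g).t) (hex : ∃ n, π n = (mcrOf g).t),
      Nat.find hex = m + 1 := fun _ _ =>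
    (Nat.find_eq_iff _).2 ⟨hm, fun n hn => by rw [hρ n (by omega)]; exact Option.some_ne_none _⟩
  rw [MCR, dif_pos ⟨m+1, hm⟩, hfirst, TPfin, Finset.sum_range_succ, ← TPfin, TPfin_mcrOf hρ, hm,
    hρ m le_rfl]
  exact congrArg (fun n : ℤ => ((n : ℝ) : EReal)) (add_zero _)

end Reduction

section Payoffs

variable {g}

lemma TPfin_succ (π : ℕ → V) (k : ℕ) : g.TPfin π (k+1) = g.TPfin π k + g.w (π k) (π (k+1)) :=
  Finset.sum_range_succ ..

lemma exists_TPfin_le_of_MP_neg {π : ℕ → V} (hMP : g.MP π < 0) (n : ℤ) :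
    ∃ k, g.TPfin π k ≤ n := by
  obtain ⟨r, hMPr, hr⟩ := EReal.lt_iff_exists_real_btwn.1 hMP
  replace hr : r < 0 := EReal.coe_lt_coe_iff.1 hr
  have hfreq := frequently_lt_of_liminf_lt (u := fun k : ℕ =>
    ((((g.TPfin π k : ℤ) : ℝ) / (k : ℝ) : ℝ) : EReal)) (h := hMPr)
  obtain ⟨K, hK⟩ := exists_nat_ge ((n : ℝ) / r)
  obtain ⟨k, hk, hlt⟩ := frequently_atTop.1 hfreq (K + 1)
  have hkpos : (0 : ℝ) < k := by exact_mod_cast (show 0 < k by omega)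
  rw [EReal.coe_lt_coe_iff, div_lt_iff₀ hkpos] at hlt
  have hrk : r * k ≤ n := by
    have : (n : ℝ) / r ≤ k := hK.trans (by exact_mod_cast (show K ≤ k by omega))
    rwa [div_le_iff_of_neg hr, mul_comm] at this
  exact ⟨k, by exact_mod_cast (hlt.trans_le hrk).le⟩

lemma MP_le_of_TPfin_le {π : ℕ → V} {C δ : ℝ} (hδ : 0 < δ)
    (h : ∀ k : ℕ, (g.TPfin π k : ℝ) ≤ C - δ * k) : g.MP π ≤ ((-(δ / 2) : ℝ) : EReal) := by
  obtain ⟨K, hK⟩ := exists_nat_ge (2 * C / δ)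
  have hev : ∀ᶠ k : ℕ in atTop,
      ((((g.TPfin π k : ℤ) : ℝ) / (k : ℝ) : ℝ) : EReal) ≤ ((-(δ / 2) : ℝ) : EReal) := by
    filter_upwards [eventually_ge_atTop (K + 1)] with k hk
    have hkpos : (0 : ℝ) < k := by exact_mod_cast (show 0 < k by omega)
    have hCk : 2 * C ≤ δ * k := by
      have : 2 * C / δ ≤ k := hK.trans (by exact_mod_cast (show K ≤ k by omega))
      rw [div_le_iff₀ hδ] at this
      linarith
    rw [EReal.coe_le_coe_iff, div_le_iff₀ hkpos]
    nlinarith [h k]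
  calc g.MP π ≤ liminf (fun _ : ℕ => ((-(δ / 2) : ℝ) : EReal)) atTop := liminf_le_liminf hev
    _ = _ := liminf_const _

end Payoffs

section WeightBound

variable [Fintype V]

def weightBound : ℤ := ∑ p : V × V, |g.w p.1 p.2|

lemma abs_w_le_weightBound (u u' : V) : |g.w u u'| ≤ g.weightBound :=
  Finset.single_le_sum (f := fun p : V × V => |g.w p.1 p.2|) (fun _ _ => abs_nonneg _)
    (Finset.mem_univ (u, u'))

lemma weightBound_nonneg : 0 ≤ g.weightBound :=
  Finset.sum_nonneg fun _ _ => abs_nonneg _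

end WeightBound

section Forward

variable {g}

lemma exists_min_TPfin_le_of_MP_neg [Fintype V]
    (hbip : ∀ v v', g.E v v' → g.owner v ≠ g.owner v') {π : ℕ → V} (hπ : g.IsPlay π)
    (hMP : g.MP π < 0) (n : ℤ) : ∃ k, g.owner (π k) = false ∧ g.TPfin π k ≤ n := by
  obtain ⟨k, hk⟩ := exists_TPfin_le_of_MP_neg hMP (n - g.weightBound)
  cases hown : g.owner (π k)
  · exact ⟨k, hown, by linarith [g.weightBound_nonneg]⟩
  · refine ⟨k+1, ?_, ?_⟩
    · simpa [hown] using (hbip _ _ (hπ k)).symm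
    · rw [TPfin_succ]
      linarith [(abs_le.1 (g.abs_w_le_weightBound (π k) (π (k+1)))).2]

def Strategy.exitAt (τ : g.Strategy) (k : ℕ) : (mcrOf g).Strategy where
  next h x := if h.length = k ∧ (mcrOf g).owner x = false then none else τ.lift.next h x
  valid h x := by
    split
    · next hexit =>
      cases x with
      | none => rfl
      | some u => exact hexit.2
    · exact τ.lift.valid h x

lemma Strategy.restrict_exitAt_next (τ : g.Strategy) {k : ℕ} (h : List V) (u : V)
    (hh : h.length ≠ k) : (τ.exitAt k).restrict.next h u = τ.next h u := by
  simp [restrict, exitAt, lift, hh, List.filterMap_map]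

lemma play_exitAt_ne_none (σ : (mcrOf g).Strategy) (τ : g.Strategy) (v : V) {k i : ℕ}
    (hi : i ≤ k) : (mcrOf g).play σ (τ.exitAt k) (some v) i ≠ none := by
  induction i with
  | zero => exact Option.some_ne_none v
  | succ i ih =>
    obtain ⟨u, hu⟩ := Option.ne_none_iff_exists'.1 (ih (by omega))
    rw [play_succ, hu, step, owner_mcrOf_some]
    cases hown : g.owner u
    · simp [Strategy.exitAt, Strategy.lift, hist_length]
      omega
    · rw [if_pos rfl]
      intro hnone
      have hE := σ.valid (hist ((mcrOf g).play σ (τ.exitAt k) (some v)) i) (some u)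
      rw [hnone] at hE
      exact Bool.false_ne_true ((hE : g.owner u = false).symm.trans hown)

lemma play_exitAt (σ : (mcrOf g).Strategy) (τ : g.Strategy) (v : V) (k : ℕ) :
    ∀ i ≤ k, (mcrOf g).play σ (τ.exitAt k) (some v) i = some (g.play σ.restrict τ v i) := by
  intro i hi
  rw [play_mcrOf_eq_some σ _ v i fun j hj => play_exitAt_ne_none σ τ v (by omega)]
  congr 1
  exact play_congr (fun _ _ _ => rfl)
    (fun h u hh => τ.restrict_exitAt_next h u hh.ne) v i hi

lemma play_exitAt_succ (σ : (mcrOf g).Strategy) (τ : g.Strategy) (v : V) {k : ℕ}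
    (hk : g.owner (g.play σ.restrict τ v k) = false) :
    (mcrOf g).play σ (τ.exitAt k) (some v) (k+1) = none := by
  rw [play_succ, play_exitAt σ τ v k k le_rfl, step, owner_mcrOf_some, hk]
  simp [Strategy.exitAt, hist_length, hk]

lemma mcrVal_eq_bot_of_lowerVal_MP_neg [Fintype V]
    (hbip : ∀ v v', g.E v v' → g.owner v ≠ g.owner v') {v : V} (h : g.lowerVal g.MP v < 0) :
    (mcrOf g).Val (some v) = ⊥ := by
  refine iSup_eq_bot.2 fun σ => (EReal.eq_bot_iff_forall_lt _).2 fun y => ?_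
  obtain ⟨τ, hτ⟩ := iInf_lt_iff.1 ((le_iSup (g.valMax g.MP v) σ.restrict).trans_lt h)
  obtain ⟨n, hn⟩ := exists_int_lt y
  obtain ⟨k, hown, hk⟩ := exists_min_TPfin_le_of_MP_neg hbip (isPlay_play _ _ _) hτ n
  refine (iInf_le _ (τ.exitAt k)).trans_lt ?_
  rw [MCR_mcrOf_of_hit (play_exitAt σ τ v k) (play_exitAt_succ σ τ v hown), EReal.coe_lt_coe_iff]
  exact (Int.cast_le.2 hk).trans_lt hn

end Forward

section Attractor

variable (T : V → ℤ → Prop)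

def AttrWithin : ℕ → V → ℤ → Prop
  | 0, u, c => T u c
  | n+1, u, c => AttrWithin n u c ∨
      (g.owner u = false ∧ ∃ u', g.E u u' ∧ AttrWithin n u' (c + g.w u u')) ∨
      (g.owner u = true ∧ ∀ u', g.E u u' → AttrWithin n u' (c + g.w u u'))

def InAttr (u : V) (c : ℤ) : Prop := ∃ n, g.AttrWithin T n u c

noncomputable def attrRank (u : V) (c : ℤ) : ℕ := sInf {n | g.AttrWithin T n u c}

variable {g T}

lemma AttrWithin.mono {m n : ℕ} (hmn : m ≤ n) {u : V} {c : ℤ} (h : g.AttrWithin T m u c) :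
    g.AttrWithin T n u c := by
  induction n with
  | zero => rwa [Nat.le_zero.1 hmn] at h
  | succ n ih =>
    rcases hmn.lt_or_eq with hlt | rfl
    · exact Or.inl (ih (by omega))
    · exact h

lemma attrRank_le {n : ℕ} {u : V} {c : ℤ} (h : g.AttrWithin T n u c) : g.attrRank T u c ≤ n :=
  Nat.sInf_le h

lemma attrWithin_attrRank {u : V} {c : ℤ} (h : g.InAttr T u c) :
    g.AttrWithin T (g.attrRank T u c) u c :=
  Nat.sInf_mem h

lemma exists_attrRank_eq_succ {u : V} {c : ℤ} (h : g.InAttr T u c) (hT : ¬ T u c) :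
    ∃ n, g.attrRank T u c = n + 1 ∧
      ((g.owner u = false ∧ ∃ u', g.E u u' ∧ g.AttrWithin T n u' (c + g.w u u')) ∨
       (g.owner u = true ∧ ∀ u', g.E u u' → g.AttrWithin T n u' (c + g.w u u'))) := by
  have hmem := attrWithin_attrRank h
  obtain ⟨n, hn⟩ : ∃ n, g.attrRank T u c = n + 1 :=
    Nat.exists_eq_add_one.2 (Nat.pos_of_ne_zero fun h0 => hT (by rwa [h0] at hmem))
  rw [hn] at hmem
  refine ⟨n, hn, hmem.resolve_left fun hlt => ?_⟩
  exact absurd (attrRank_le hlt) (by omega)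

lemma exists_attrRank_lt_of_min {u : V} {c : ℤ} (ho : g.owner u = false) (h : g.InAttr T u c)
    (hT : ¬ T u c) : ∃ u', g.E u u' ∧ g.InAttr T u' (c + g.w u u') ∧
      g.attrRank T u' (c + g.w u u') < g.attrRank T u c := by
  obtain ⟨n, hn, ⟨-, u', he, hu'⟩ | ⟨ho', -⟩⟩ := exists_attrRank_eq_succ h hT
  · exact ⟨u', he, ⟨n, hu'⟩, by rw [hn]; exact Nat.lt_succ_of_le (attrRank_le hu')⟩
  · simp [ho] at ho'

lemma attrRank_lt_of_max {u u' : V} {c : ℤ} (ho : g.owner u = true) (h : g.InAttr T u c)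
    (hT : ¬ T u c) (he : g.E u u') : g.InAttr T u' (c + g.w u u') ∧
      g.attrRank T u' (c + g.w u u') < g.attrRank T u c := by
  obtain ⟨n, hn, ⟨ho', -⟩ | ⟨-, hall⟩⟩ := exists_attrRank_eq_succ h hT
  · simp [ho] at ho'
  · exact ⟨⟨n, hall u' he⟩, by rw [hn]; exact Nat.lt_succ_of_le (attrRank_le (hall u' he))⟩

lemma not_inAttr_of_min {u u' : V} {c : ℤ} (ho : g.owner u = false) (h : ¬ g.InAttr T u c)
    (he : g.E u u') : ¬ g.InAttr T u' (c + g.w u u') :=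
  fun ⟨n, hn⟩ => h ⟨n+1, Or.inr (Or.inl ⟨ho, u', he, hn⟩)⟩

lemma exists_not_inAttr_of_max [Fintype V] {u : V} {c : ℤ} (ho : g.owner u = true)
    (h : ¬ g.InAttr T u c) : ∃ u', g.E u u' ∧ ¬ g.InAttr T u' (c + g.w u u') := by
  by_contra! hall
  have : ∀ u', ∃ n, g.E u u' → g.AttrWithin T n u' (c + g.w u u') := fun u' => by
    by_cases he : g.E u u'
    · exact (hall u' he).imp fun _ hn _ => hn
    · exact ⟨0, fun h' => absurd h' he⟩
  choose n hn using this
  exact h ⟨Finset.univ.sup n + 1, Or.inr (Or.inr ⟨ho, fun u' he =>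
    (hn u' he).mono (Finset.le_sup (Finset.mem_univ _))⟩)⟩

variable (g T)

open Classical in
noncomputable def attrMove (c : ℤ) (u : V) : V :=
  if h : ∃ u', g.E u u' ∧ g.InAttr T u' (c + g.w u u') ∧
      g.attrRank T u' (c + g.w u u') < g.attrRank T u c then h.choose else g.someSucc u

open Classical in
noncomputable def avoidMove (c : ℤ) (u : V) : V :=
  if h : ∃ u', g.E u u' ∧ ¬ g.InAttr T u' (c + g.w u u') then h.choose else g.someSucc u

variable {g T}

lemma E_attrMove (c : ℤ) (u : V) : g.E u (g.attrMove T c u) := by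
  unfold attrMove
  split
  · next h => exact h.choose_spec.1
  · exact g.E_someSucc u

lemma E_avoidMove (c : ℤ) (u : V) : g.E u (g.avoidMove T c u) := by
  unfold avoidMove
  split
  · next h => exact h.choose_spec.1
  · exact g.E_someSucc u

lemma attrMove_spec {u : V} {c : ℤ} (ho : g.owner u = false) (h : g.InAttr T u c)
    (hT : ¬ T u c) :
    g.InAttr T (g.attrMove T c u) (c + g.w u (g.attrMove T c u)) ∧
      g.attrRank T (g.attrMove T c u) (c + g.w u (g.attrMove T c u)) < g.attrRank T u c := by
  have hex := exists_attrRank_lt_of_min ho h hT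
  rw [attrMove, dif_pos hex]
  exact hex.choose_spec.2

lemma avoidMove_spec [Fintype V] {u : V} {c : ℤ} (ho : g.owner u = true)
    (h : ¬ g.InAttr T u c) : ¬ g.InAttr T (g.avoidMove T c u) (c + g.w u (g.avoidMove T c u)) := by
  have hex := exists_not_inAttr_of_max ho h
  rw [avoidMove, dif_pos hex]
  exact hex.choose_spec.2

end Attractor

section DropChain

def dropTarget (Y : Set V) (u : V) (c : ℤ) : Prop := u ∈ Y ∧ c < 0

def canDrop (Y : Set V) : Set V := {u | g.InAttr (dropTarget Y) u 0}

def dropChain : ℕ → Set V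
  | 0 => Set.univ
  | i+1 => dropChain i ∩ g.canDrop (dropChain i)

lemma dropChain_antitone : Antitone g.dropChain :=
  antitone_nat_of_succ_le fun _ => Set.inter_subset_left

lemma exists_dropChain_succ_eq [Finite V] : ∃ s, g.dropChain (s+1) = g.dropChain s := by
  obtain ⟨s, hs⟩ := WellFoundedLT.antitone_chain_condition g.dropChain_antitone
  exact ⟨s, (hs (s+1) (by omega)).symm⟩

noncomputable def dropSet [Finite V] : Set V := g.dropChain g.exists_dropChain_succ_eq.choose

lemma dropSet_subset_canDrop [Finite V] : g.dropSet ⊆ g.canDrop g.dropSet := by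
  have h := g.exists_dropChain_succ_eq.choose_spec
  rw [dropChain] at h
  exact Set.inter_eq_left.1 h

noncomputable def dropLevel (u : V) : ℕ := sInf {j | u ∉ g.dropChain (j+1)}

variable {g}

lemma mem_dropChain_dropLevel (u : V) : u ∈ g.dropChain (g.dropLevel u) := by
  cases hl : g.dropLevel u with
  | zero => trivial
  | succ i => exact not_not.1 (Nat.notMem_of_lt_sInf (show i < g.dropLevel u by omega))

lemma exists_eq_succ_of_notMem_dropChain {u : V} {j : ℕ} (h : u ∉ g.dropChain j) :
    ∃ i, j = i + 1 :=
  Nat.exists_eq_add_one.2 (Nat.pos_of_ne_zero fun h0 => h (by rw [h0]; trivial))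

lemma dropLevel_lt {u : V} {j : ℕ} (h : u ∉ g.dropChain j) : g.dropLevel u < j := by
  obtain ⟨i, rfl⟩ := exists_eq_succ_of_notMem_dropChain h
  exact Nat.lt_succ_of_le (Nat.sInf_le h)

lemma notMem_canDrop_dropLevel {u : V} {j : ℕ} (h : u ∉ g.dropChain j) :
    u ∉ g.canDrop (g.dropChain (g.dropLevel u)) := fun hu => by
  obtain ⟨i, rfl⟩ := exists_eq_succ_of_notMem_dropChain h
  exact Nat.sInf_mem (s := {i | u ∉ g.dropChain (i+1)}) ⟨i, h⟩ ⟨mem_dropChain_dropLevel u, hu⟩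

end DropChain

section MinDrop

variable [Fintype V]

open Classical in
noncomputable def resetUpd (c : ℤ) (u u' : V) : ℤ :=
  if dropTarget g.dropSet u' (c + g.w u u') then 0 else c + g.w u u'

noncomputable def phasePayoff (π : ℕ → V) (k : ℕ) : ℤ := memory (fun _ => 0) g.resetUpd π k

noncomputable def minDropStrategy : g.Strategy :=
  Strategy.ofMemory (fun _ => 0) g.resetUpd (g.attrMove (dropTarget g.dropSet)) E_attrMove

noncomputable def dropRankBound : ℕ :=
  Finset.univ.sup fun u => g.attrRank (dropTarget g.dropSet) u 0

/-- With `R = dropRankBound`, `(R + 1) * b + rank` decreases by at least one per step: inside a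
phase the rank drops, and a reset lowers the base payoff `b` by at least one while raising the
rank to at most `R`. -/
def MinDropInv (k : ℕ) (u : V) (c b : ℤ) : Prop :=
  g.InAttr (dropTarget g.dropSet) u c ∧ ¬ dropTarget g.dropSet u c ∧
    c + g.weightBound * g.attrRank (dropTarget g.dropSet) u c ≤
      g.weightBound * g.dropRankBound ∧
    (g.dropRankBound + 1) * b + g.attrRank (dropTarget g.dropSet) u c + k ≤ g.dropRankBound

variable {g}

lemma attrRank_le_dropRankBound (u : V) :
    (g.attrRank (dropTarget g.dropSet) u 0 : ℤ) ≤ g.dropRankBound := by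
  exact_mod_cast Finset.le_sup (f := fun u => g.attrRank (dropTarget g.dropSet) u 0)
    (Finset.mem_univ u)

lemma minDropInv_zero {u : V} (hu : u ∈ g.dropSet) : g.MinDropInv 0 u 0 0 := by
  refine ⟨g.dropSet_subset_canDrop hu, fun h => lt_irrefl _ h.2, ?_, ?_⟩
  · simpa using mul_le_mul_of_nonneg_left (attrRank_le_dropRankBound u) g.weightBound_nonneg
  · simpa using attrRank_le_dropRankBound u

lemma MinDropInv.succ {k : ℕ} {u u' : V} {c b : ℤ} (h : g.MinDropInv k u c b)
    (hA : g.InAttr (dropTarget g.dropSet) u' (c + g.w u u'))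
    (hlt : g.attrRank (dropTarget g.dropSet) u' (c + g.w u u') <
      g.attrRank (dropTarget g.dropSet) u c) :
    g.MinDropInv (k+1) u' (g.resetUpd c u u') (b + (c + g.w u u') - g.resetUpd c u u') := by
  obtain ⟨-, -, hc, hpot⟩ := h
  have hW := g.weightBound_nonneg
  have hlt : (g.attrRank (dropTarget g.dropSet) u' (c + g.w u u') : ℤ) + 1 ≤
      g.attrRank (dropTarget g.dropSet) u c := by exact_mod_cast hlt
  unfold resetUpd
  split_ifs with hreset
  · have hr := attrRank_le_dropRankBound (g := g) u'
    refine ⟨g.dropSet_subset_canDrop hreset.1, fun h => lt_irrefl _ h.2, ?_, ?_⟩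
    · simpa using mul_le_mul_of_nonneg_left hr hW
    · have hdrop := mul_le_mul_of_nonneg_left (Int.le_sub_one_of_lt hreset.2)
        (by positivity : (0 : ℤ) ≤ g.dropRankBound + 1)
      push_cast
      linarith
  · refine ⟨hA, hreset, ?_, ?_⟩
    · nlinarith [(abs_le.1 (g.abs_w_le_weightBound u u')).2]
    · push_cast
      linarith

lemma minDropInv_play {π : ℕ → V} (hπ : g.IsPlay π) (hconf : g.Conforms false g.minDropStrategy π)
    (hv : π 0 ∈ g.dropSet) (k : ℕ) :
    g.MinDropInv k (π k) (g.phasePayoff π k) (g.TPfin π k - g.phasePayoff π k) := by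
  induction k with
  | zero => simpa [phasePayoff, memory, TPfin] using minDropInv_zero hv
  | succ k ih =>
    have hstep :
        g.InAttr (dropTarget g.dropSet) (π (k+1)) (g.phasePayoff π k + g.w (π k) (π (k+1))) ∧
        g.attrRank (dropTarget g.dropSet) (π (k+1)) (g.phasePayoff π k + g.w (π k) (π (k+1))) <
          g.attrRank (dropTarget g.dropSet) (π k) (g.phasePayoff π k) := by
      cases hown : g.owner (π k)
      · rw [hconf k hown, minDropStrategy, Strategy.ofMemory_next_hist]
        exact attrMove_spec hown ih.1 ih.2.1
      · exact attrRank_lt_of_max hown ih.1 ih.2.1 (hπ k)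
    have hc : g.phasePayoff π (k+1) = g.resetUpd (g.phasePayoff π k) (π k) (π (k+1)) := rfl
    rw [hc, TPfin_succ]
    convert ih.succ hstep.1 hstep.2 using 2
    ring

lemma TPfin_le_of_minDrop (σ : g.Strategy) {v : V} (hv : v ∈ g.dropSet) (k : ℕ) :
    (g.TPfin (g.play σ g.minDropStrategy v) k : ℝ) ≤
      (g.weightBound * g.dropRankBound + 1 : ℤ) - 1 / (g.dropRankBound + 1) * k := by
  obtain ⟨-, -, hc, hpot⟩ :=
    minDropInv_play (isPlay_play _ _ _) (conforms_play_min σ _ _) hv k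
  set R := g.dropRankBound
  set W := g.weightBound
  set c := g.phasePayoff (g.play σ g.minDropStrategy v) k
  have hcW : (R + 1 : ℤ) * c ≤ (R + 1) * (W * R) :=
    mul_le_mul_of_nonneg_left (by nlinarith [g.weightBound_nonneg]) (by positivity)
  have hZ : ((R : ℝ) + 1) * g.TPfin (g.play σ g.minDropStrategy v) k + k ≤
      ((R : ℝ) + 1) * ((W * R + 1 : ℤ) : ℝ) := by
    exact_mod_cast (show (R + 1 : ℤ) * g.TPfin (g.play σ g.minDropStrategy v) k + k ≤
      (R + 1) * (W * R + 1) by nlinarith)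
  have hpos : (0 : ℝ) < R + 1 := by positivity
  rw [le_sub_iff_add_le]
  calc _ = (((R : ℝ) + 1) * g.TPfin (g.play σ g.minDropStrategy v) k + k) / (R + 1) := by
        field_simp
    _ ≤ _ := by rw [div_le_iff₀' hpos]; exact hZ

lemma lowerVal_MP_neg_of_mem_dropSet {v : V} (hv : v ∈ g.dropSet) : g.lowerVal g.MP v < 0 := by
  have hδ : (0 : ℝ) < 1 / (g.dropRankBound + 1) := by positivity
  have hle : g.lowerVal g.MP v ≤ ((-(1 / (g.dropRankBound + 1) / 2) : ℝ) : EReal) :=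
    iSup_le fun σ => (iInf_le _ g.minDropStrategy).trans
      (MP_le_of_TPfin_le hδ (TPfin_le_of_minDrop σ hv))
  exact hle.trans_lt (EReal.coe_lt_coe_iff.2 (by linarith))

end MinDrop

section MaxAvoid

variable [Fintype V]

open Classical in
noncomputable def levelUpd (m : ℕ × ℤ) (u u' : V) : ℕ × ℤ :=
  if u' ∈ g.dropChain m.1 then (m.1, m.2 + g.w u u') else (g.dropLevel u', 0)

noncomputable def levelMemory (π : ℕ → V) (k : ℕ) : ℕ × ℤ :=
  memory (fun u => (g.dropLevel u, 0)) g.levelUpd π k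

noncomputable def maxAvoidStrategy : g.Strategy :=
  Strategy.ofMemory (fun u => (g.dropLevel u, 0)) g.levelUpd
    (fun m => g.avoidMove (dropTarget (g.dropChain m.1)) m.2) fun _ _ => E_avoidMove _ _

/-- `b` is the total payoff at the last change of level; every change of level lowers the level
`m.1` and costs at most one edge weight. -/
def MaxAvoidInv (L : ℕ) (u : V) (m : ℕ × ℤ) (b : ℤ) : Prop :=
  u ∈ g.dropChain m.1 ∧ ¬ g.InAttr (dropTarget (g.dropChain m.1)) u m.2 ∧
    ((m.1 : ℤ) - L) * g.weightBound ≤ b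

variable {g}

lemma MaxAvoidInv.nonneg {L : ℕ} {u : V} {m : ℕ × ℤ} {b : ℤ} (h : g.MaxAvoidInv L u m b) :
    0 ≤ m.2 :=
  not_lt.1 fun hneg => h.2.1 ⟨0, h.1, hneg⟩

lemma MaxAvoidInv.succ {L : ℕ} {u u' : V} {m : ℕ × ℤ} {b : ℤ} (h : g.MaxAvoidInv L u m b)
    (hout : ¬ g.InAttr (dropTarget (g.dropChain m.1)) u' (m.2 + g.w u u')) :
    g.MaxAvoidInv L u' (g.levelUpd m u u') (b + (m.2 + g.w u u') - (g.levelUpd m u u').2) := by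
  have hc := h.nonneg
  obtain ⟨-, -, hb⟩ := h
  unfold levelUpd
  split_ifs with hstay
  · exact ⟨hstay, hout, by simpa using hb⟩
  · refine ⟨mem_dropChain_dropLevel u', notMem_canDrop_dropLevel hstay, ?_⟩
    have hlt : (g.dropLevel u' : ℤ) + 1 ≤ m.1 := by exact_mod_cast dropLevel_lt hstay
    have := mul_le_mul_of_nonneg_right hlt g.weightBound_nonneg
    have hw := (abs_le.1 (g.abs_w_le_weightBound u u')).1
    simp only [sub_zero]
    nlinarith

lemma maxAvoidInv_play {π : ℕ → V} (hπ : g.IsPlay π)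
    (hconf : g.Conforms true g.maxAvoidStrategy π) (hv : π 0 ∉ g.dropSet) (k : ℕ) :
    g.MaxAvoidInv (g.dropLevel (π 0)) (π k) (g.levelMemory π k)
      (g.TPfin π k - (g.levelMemory π k).2) := by
  induction k with
  | zero =>
    exact ⟨mem_dropChain_dropLevel _, notMem_canDrop_dropLevel hv,
      by simp [levelMemory, memory, TPfin]⟩
  | succ k ih =>
    have hout : ¬ g.InAttr (dropTarget (g.dropChain (g.levelMemory π k).1)) (π (k+1))
        ((g.levelMemory π k).2 + g.w (π k) (π (k+1))) := by
      cases hown : g.owner (π k)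
      · exact not_inAttr_of_min hown ih.2.1 (hπ k)
      · rw [hconf k hown, maxAvoidStrategy, Strategy.ofMemory_next_hist]
        exact avoidMove_spec hown ih.2.1
    have hm : g.levelMemory π (k+1) = g.levelUpd (g.levelMemory π k) (π k) (π (k+1)) := rfl
    rw [hm, TPfin_succ]
    convert ih.succ hout using 2
    ring

lemma neg_le_TPfin_of_maxAvoid {π : ℕ → V} (hπ : g.IsPlay π)
    (hconf : g.Conforms true g.maxAvoidStrategy π) (hv : π 0 ∉ g.dropSet) (k : ℕ) :
    -(g.dropLevel (π 0) * g.weightBound) ≤ g.TPfin π k := by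
  have hinv := maxAvoidInv_play hπ hconf hv k
  have := hinv.nonneg
  have := hinv.2.2
  nlinarith [g.weightBound_nonneg]

lemma le_MCR_of_maxAvoid (τ : (mcrOf g).Strategy) {v : V} (hv : v ∉ g.dropSet) :
    (((-(g.dropLevel v * g.weightBound) : ℤ) : ℝ) : EReal) ≤
      (mcrOf g).MCR (mcrOf g).t ((mcrOf g).play g.maxAvoidStrategy.lift τ (some v)) := by
  classical
  set π := (mcrOf g).play g.maxAvoidStrategy.lift τ (some v)
  by_cases hhit : ∃ n, π n = (mcrOf g).t
  · obtain ⟨m, hm⟩ : ∃ m, Nat.find hhit = m + 1 := Nat.exists_eq_add_one.2 <|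
      Nat.pos_of_ne_zero fun h0 => Option.some_ne_none v (h0 ▸ Nat.find_spec hhit :)
    have hρ : ∀ i ≤ m, π i = some (g.play g.maxAvoidStrategy τ.restrict v i) := fun i hi => by
      rw [← Strategy.restrict_lift g.maxAvoidStrategy]
      exact play_mcrOf_eq_some _ τ v i fun j hj => Nat.find_min hhit (by omega)
    rw [MCR_mcrOf_of_hit hρ (hm ▸ Nat.find_spec hhit), EReal.coe_le_coe_iff, Int.cast_le]
    exact neg_le_TPfin_of_maxAvoid (isPlay_play _ _ _) (conforms_play_max _ _ _) hv m
  · rw [MCR, dif_neg hhit]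
    exact le_top

lemma mcrVal_ne_bot_of_notMem_dropSet {v : V} (hv : v ∉ g.dropSet) :
    (mcrOf g).Val (some v) ≠ ⊥ :=
  ne_bot_of_le_ne_bot (EReal.coe_ne_bot _) <|
    le_iSup_of_le g.maxAvoidStrategy.lift (le_iInf fun τ => le_MCR_of_maxAvoid τ hv)

end MaxAvoid

end Game

/-- for a bipartite mean-payoff game `G`, a vertex has negative
mean-payoff value iff its value in the associated MCR game `G'` is `−∞`. -/
theorem statement_4 {V : Type} [Fintype V] (g : Game V)
    (hbip : ∀ v v', g.E v v' → g.owner v ≠ g.owner v') (v : V) :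
    g.lowerVal g.MP v < 0 ↔ (mcrOf g).Val (some v) = ⊥ := by
  refine ⟨Game.mcrVal_eq_bot_of_lowerVal_MP_neg hbip, fun hbot => ?_⟩
  by_cases hv : v ∈ g.dropSet
  · exact Game.lowerVal_MP_neg_of_mem_dropSet hv
  · exact absurd hbot (Game.mcrVal_ne_bot_of_notMem_dropSet hv)
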